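/- Let f be a transcendental entire function, let R > 0 be such that M(r) > r for all r ≥ R, let 0 < ε < 1 and put m = 1/ε. Then f is ε-regular if and only if there exists a sequence (r_n)_{n≥0} of positive reals such that r_n ≥ M^n(R) and M(r_n) ≥ r_{n+1}^m for all n ≥ 0. -/

import Mathlib

open Set Filter

/-- The maximum modulus of `f` on the circle of radius `r`. -/
noncomputable def maxMod (f : ℂ → ℂ) (r : ℝ) : ℝ :=
  sSup ((fun z => ‖f z‖) '' {z : ℂ | ‖z‖ = r})

/-- The minimum modulus of `f` on the circle of radius `r`. -/
noncomputable def minMod (f : ℂ → ℂ) (r : ℝ) : ℝ :=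
  sInf ((fun z => ‖f z‖) '' {z : ℂ | ‖z‖ = r})

/-- `f` is a transcendental entire function: entire and not a polynomial. -/
def TranscendentalEntire (f : ℂ → ℂ) : Prop :=
  Differentiable ℂ f ∧ ¬ ∃ p : Polynomial ℂ, ∀ z, f z = p.eval z

/-- `μ_ε(r) = M(r)^ε`. -/
noncomputable def muEps (f : ℂ → ℂ) (ε : ℝ) (r : ℝ) : ℝ := (maxMod f r) ^ ε

/-- The fast escaping set `A(f)`. -/
def fastEscaping (f : ℂ → ℂ) : Set ℂ :=
  {z : ℂ | ∀ R : ℝ, 0 < R → (∀ r ≥ R, r < maxMod f r) →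
    ∃ ℓ : ℕ, ∀ n : ℕ, (maxMod f)^[n] R ≤ ‖f^[n + ℓ] z‖}

/-- The set `Q_ε(f)`. -/
def Qeps (f : ℂ → ℂ) (ε : ℝ) : Set ℂ :=
  {z : ℂ | ∀ R : ℝ, 0 < R → (∀ r ≥ R, r < muEps f ε r) →
    ∃ ℓ : ℕ, ∀ n : ℕ, (muEps f ε)^[n] R ≤ ‖f^[n + ℓ] z‖}

/-- The quite fast escaping set `Q(f) = ⋃_{0<ε<1} Q_ε(f)`. -/
def Qset (f : ℂ → ℂ) : Set ℂ := ⋃ ε ∈ Ioo (0:ℝ) 1, Qeps f ε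

/-- `f` is `ε`-regular. -/
def epsRegular (f : ℂ → ℂ) (ε : ℝ) : Prop :=
  ∀ R : ℝ, 0 < R → (∀ r ≥ R, r < maxMod f r) →
    ∃ r : ℝ, 0 < r ∧ ∀ n : ℕ, (maxMod f)^[n] R ≤ (muEps f ε)^[n] r

/-- `f` is weakly regular: `ε`-regular for every `ε ∈ (0,1)`. -/
def weaklyRegular (f : ℂ → ℂ) : Prop := ∀ ε ∈ Ioo (0:ℝ) 1, epsRegular f ε

/-- `f` is log-regular (characterization from Corollary 4.3). -/
def logRegular (f : ℂ → ℂ) : Prop :=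
  ∃ r₁ > (1:ℝ), ∃ k > (1:ℝ), ∃ d > (1:ℝ), ∀ r ≥ r₁,
    (maxMod f r) ^ (k * d) ≤ maxMod f (r ^ k)

/-!
Taking `r_n = μ_ε^n(r)` gives one direction, because `μ_ε(r)^(1/ε) = M(r)`.
Conversely, `M` and hence `μ_ε` are monotone, so `r_n ≤ μ_ε^n(r_0)`. The orbit `M^n(R)` tends to
infinity, since `M` is lower semicontinuous and `M(r) > r` for `r ≥ R`; so any `R' > 0` lies below
some `M^k(R)`, and then `M^n(R') ≤ M^(n+k)(R) ≤ r_(n+k) ≤ μ_ε^n(μ_ε^k(r_0))`.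
-/

lemma maxMod_nonneg (f : ℂ → ℂ) (r : ℝ) : 0 ≤ maxMod f r :=
  Real.sSup_nonneg <| by rintro _ ⟨z, -, rfl⟩; exact norm_nonneg _

lemma norm_le_maxMod {f : ℂ → ℂ} (hf : Continuous f) {z : ℂ} {r : ℝ} (hz : ‖z‖ = r) :
    ‖f z‖ ≤ maxMod f r := by
  have hsphere : {z : ℂ | ‖z‖ = r} = Metric.sphere 0 r := by ext; simp
  refine le_csSup ?_ ⟨z, hz, rfl⟩
  rw [hsphere]
  exact (isCompact_sphere 0 r).bddAbove_image (continuous_norm.comp hf).continuousOn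

lemma exists_lt_norm_of_lt_maxMod (f : ℂ → ℂ) {r y : ℝ} (hr : 0 ≤ r) (hy : y < maxMod f r) :
    ∃ z : ℂ, ‖z‖ = r ∧ y < ‖f z‖ := by
  have hne : ({z : ℂ | ‖z‖ = r}).Nonempty := ⟨r, by simp [abs_of_nonneg hr]⟩
  obtain ⟨_, ⟨z, hz, rfl⟩, hyz⟩ := exists_lt_of_lt_csSup (hne.image _) hy
  exact ⟨z, hz, hyz⟩

lemma maxMod_monotone {f : ℂ → ℂ} (hf : Differentiable ℂ f) : Monotone (maxMod f) := by
  intro r s hrs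
  rcases lt_or_ge r 0 with hr | hr
  · have hempty : {z : ℂ | ‖z‖ = r} = ∅ := by
      ext z; simpa using (hr.trans_le (norm_nonneg z)).ne'
    rw [maxMod, hempty, image_empty, Real.sSup_empty]
    exact maxMod_nonneg f s
  rcases hrs.eq_or_lt with rfl | hrs
  · rfl
  have hs : s ≠ 0 := (hr.trans_lt hrs).ne'
  refine le_of_forall_lt fun y hy => ?_
  obtain ⟨z, hz, hyz⟩ := exists_lt_norm_of_lt_maxMod f hr hy
  have hz_mem : z ∈ closure (Metric.ball (0 : ℂ) s) := by
    rw [closure_ball 0 hs, mem_closedBall_zero_iff, hz]; exact hrs.le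
  refine hyz.trans_le <| Complex.norm_le_of_forall_mem_frontier_norm_le Metric.isBounded_ball
    hf.diffContOnCl (fun w hw => norm_le_maxMod hf.continuous ?_) hz_mem
  rw [frontier_ball 0 hs] at hw
  simpa using hw

lemma lowerSemicontinuousAt_maxMod {f : ℂ → ℂ} (hf : Continuous f) {r : ℝ} (hr : 0 < r) :
    LowerSemicontinuousAt (maxMod f) r := by
  intro y hy
  obtain ⟨z, hz, hyz⟩ := exists_lt_norm_of_lt_maxMod f hr.le hy
  -- compare `maxMod f s` with `‖f‖` at the point of modulus `s` on the ray through `z`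
  have hray : Continuous fun s : ℝ => ‖f ((s / r : ℝ) * z)‖ := by fun_prop
  have hyz' : y < ‖f ((r / r : ℝ) * z)‖ := by simpa [div_self hr.ne'] using hyz
  filter_upwards [hray.continuousAt.eventually (lt_mem_nhds hyz'), lt_mem_nhds hr] with s hys hs
  refine hys.trans_le (norm_le_maxMod hf ?_)
  rw [norm_mul, hz, Complex.norm_real, Real.norm_of_nonneg (div_nonneg hs.le hr.le),
    div_mul_cancel₀ _ hr.ne']

lemma tendsto_iterate_atTop_of_lt_self {g : ℝ → ℝ} {R : ℝ} (hg : ∀ r ≥ R, r < g r)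
    (hlsc : ∀ r ≥ R, LowerSemicontinuousAt g r) :
    Tendsto (fun n => g^[n] R) atTop atTop := by
  have hge : ∀ n, R ≤ g^[n] R := by
    intro n
    induction n with
    | zero => exact le_rfl
    | succ n ih => rw [Function.iterate_succ_apply']; exact ih.trans (hg _ ih).le
  have hmono : Monotone fun n => g^[n] R := monotone_nat_of_le_succ fun n => by
    rw [Function.iterate_succ_apply']; exact (hg _ (hge n)).le
  refine (tendsto_atTop_of_monotone hmono).resolve_right ?_
  rintro ⟨L, hL⟩
  have hRL : R ≤ L := ge_of_tendsto' hL hge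
  -- lower semicontinuity at the limit `L` would push the orbit above its supremum `L`
  obtain ⟨n, hn⟩ := (hL.eventually (hlsc L hRL L (hg L hRL))).exists
  have : g^[n + 1] R ≤ L := hmono.ge_of_tendsto hL (n + 1)
  rw [Function.iterate_succ_apply'] at this
  exact this.not_gt hn

lemma muEps_nonneg (f : ℂ → ℂ) (ε r : ℝ) : 0 ≤ muEps f ε r :=
  Real.rpow_nonneg (maxMod_nonneg f r) ε

lemma muEps_monotone {f : ℂ → ℂ} (hf : Differentiable ℂ f) {ε : ℝ} (hε : 0 ≤ ε) :
    Monotone (muEps f ε) :=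
  fun _ _ hrs => Real.rpow_le_rpow (maxMod_nonneg f _) (maxMod_monotone hf hrs) hε

lemma rpow_one_div_le_maxMod_iff (f : ℂ → ℂ) {ε a : ℝ} (hε : 0 < ε) (ha : 0 ≤ a) (r : ℝ) :
    a ^ (1 / ε) ≤ maxMod f r ↔ a ≤ muEps f ε r := by
  rw [one_div, muEps, Real.rpow_inv_le_iff_of_pos ha (maxMod_nonneg f r) hε]

lemma epsRegular_of_le_muEps {f : ℂ → ℂ} (hf : Differentiable ℂ f) {ε R : ℝ} (hε : 0 ≤ ε)
    (hR : Tendsto (fun n => (maxMod f)^[n] R) atTop atTop) {rs : ℕ → ℝ}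
    (hle : ∀ n, (maxMod f)^[n] R ≤ rs n) (hstep : ∀ n, rs (n + 1) ≤ muEps f ε (rs n)) :
    epsRegular f ε := by
  intro R' hR' _
  obtain ⟨k, hk⟩ := (hR.eventually_ge_atTop R').exists
  have hrs : ∀ n, rs n ≤ (muEps f ε)^[n] (rs 0) := fun n =>
    (muEps_monotone hf hε).seq_le_seq (y := fun n => (muEps f ε)^[n] (rs 0)) n le_rfl
      (fun k _ => hstep k)
      (fun k _ => (Function.iterate_succ_apply' _ _ _).ge)
  refine ⟨(muEps f ε)^[k] (rs 0), hR'.trans_le (hk.trans ((hle k).trans (hrs k))), fun n => ?_⟩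
  calc (maxMod f)^[n] R' ≤ (maxMod f)^[n] ((maxMod f)^[k] R) := (maxMod_monotone hf).iterate n hk
    _ = (maxMod f)^[n + k] R := (Function.iterate_add_apply _ n k R).symm
    _ ≤ (muEps f ε)^[n + k] (rs 0) := (hle _).trans (hrs _)
    _ = (muEps f ε)^[n] ((muEps f ε)^[k] (rs 0)) := Function.iterate_add_apply _ n k _

theorem stmt_11 (f : ℂ → ℂ) (hf : TranscendentalEntire f) (R : ℝ) (hR : 0 < R)
    (hM : ∀ r ≥ R, r < maxMod f r) (ε : ℝ) (hε : ε ∈ Ioo (0:ℝ) 1) :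
    epsRegular f ε ↔
      ∃ rs : ℕ → ℝ, ∀ n : ℕ,
        (maxMod f)^[n] R ≤ rs n ∧ (rs (n + 1)) ^ (1 / ε) ≤ maxMod f (rs n) := by
  have hε0 : 0 < ε := hε.1
  constructor
  · intro hreg
    obtain ⟨r, -, hr⟩ := hreg R hR hM
    refine ⟨fun n => (muEps f ε)^[n] r, fun n => ⟨hr n, ?_⟩⟩
    simp only [Function.iterate_succ_apply']
    exact (rpow_one_div_le_maxMod_iff f hε0 (muEps_nonneg f ε _) _).2 le_rfl
  · rintro ⟨rs, hrs⟩
    have hescape := tendsto_iterate_atTop_of_lt_self hM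
      fun r hr => lowerSemicontinuousAt_maxMod hf.1.continuous (hR.trans_le hr)
    refine epsRegular_of_le_muEps hf.1 hε0.le hescape (fun n => (hrs n).1) fun n => ?_
    have hnonneg : 0 ≤ rs (n + 1) := by
      have hle := (hrs (n + 1)).1
      rw [Function.iterate_succ_apply'] at hle
      exact (maxMod_nonneg f _).trans hle
    exact (rpow_one_div_le_maxMod_iff f hε0 hnonneg _).1 (hrs n).2
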